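/- arXiv:2111.00479 — 2 statements merged into one kernel-verified Lean document; each statement's English description precedes it below -/
import Mathlib

section
/- Let T, S be payoff parameters with S<0, 1<T, T+S<2, let δ∈(δ_c,1) where δ_c=max((T−1)/T, −S/(1−S)), assume additionally 0<T+S, and let p∈[0,1]^5 be a pcZD strategy. Then every adapting path λ:{0,1,…,N}→[0,1]^5 of the adaptive player Y terminates at a strategy q*=λ(N) satisfying either (q*_0,q*_1,q*_2)=(1,1,1), or (p_0,p_1,q*_0,q*_1)=(1,1,1,1); moreover the first case holds whenever p_0<1 or p_1<1. -/
noncomputable section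
namespace ZDGame

open Matrix

/-- membership in the unit box `[0,1]^5` -/
def unitBox (v : Fin 5 → ℝ) : Prop := ∀ i, 0 ≤ v i ∧ v i ≤ 1

/-- the Markov transition matrix of the repeated game -/
def Mmat (p q : Fin 5 → ℝ) : Matrix (Fin 4) (Fin 4) ℝ :=
  !![p 1 * q 1, p 1 * (1 - q 1), (1 - p 1) * q 1, (1 - p 1) * (1 - q 1);
     p 2 * q 3, p 2 * (1 - q 3), (1 - p 2) * q 3, (1 - p 2) * (1 - q 3);
     p 3 * q 2, p 3 * (1 - q 2), (1 - p 3) * q 2, (1 - p 3) * (1 - q 2);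
     p 4 * q 4, p 4 * (1 - q 4), (1 - p 4) * q 4, (1 - p 4) * (1 - q 4)]

/-- the initial distribution v(0) -/
def vInit (p q : Fin 5 → ℝ) : Fin 4 → ℝ :=
  ![p 0 * q 0, p 0 * (1 - q 0), (1 - p 0) * q 0, (1 - p 0) * (1 - q 0)]

def SYvec (T S : ℝ) : Fin 4 → ℝ := ![1, T, S, 0]
def SXvec (T S : ℝ) : Fin 4 → ℝ := ![1, S, T, 0]
def ones4 : Fin 4 → ℝ := ![1, 1, 1, 1]

/-- average expected payoff with payoff vector `f` -/
def payoff (δ : ℝ) (p q : Fin 5 → ℝ) (f : Fin 4 → ℝ) : ℝ :=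
  (1 - δ) * dotProduct (Matrix.vecMul (vInit p q) (1 - δ • Mmat p q)⁻¹) f

def sX (δ T S : ℝ) (p q : Fin 5 → ℝ) : ℝ := payoff δ p q (SXvec T S)
def sY (δ T S : ℝ) (p q : Fin 5 → ℝ) : ℝ := payoff δ p q (SYvec T S)

/-- the matrix `A(p,q,f)` from the determinant representation -/
def Amat (δ : ℝ) (p q : Fin 5 → ℝ) (f : Fin 4 → ℝ) : Matrix (Fin 4) (Fin 4) ℝ :=
  !![-1 + δ * p 1 * q 1 + (1 - δ) * p 0 * q 0, -1 + δ * p 1 + (1 - δ) * p 0,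
       -1 + δ * q 1 + (1 - δ) * q 0, f 0;
     δ * p 3 * q 2 + (1 - δ) * p 0 * q 0, δ * p 3 + (1 - δ) * p 0,
       -1 + δ * q 2 + (1 - δ) * q 0, f 1;
     δ * p 2 * q 3 + (1 - δ) * p 0 * q 0, -1 + δ * p 2 + (1 - δ) * p 0,
       δ * q 3 + (1 - δ) * q 0, f 2;
     δ * p 4 * q 4 + (1 - δ) * p 0 * q 0, δ * p 4 + (1 - δ) * p 0,
       δ * q 4 + (1 - δ) * q 0, f 3]

/-- `D(p,q,f) = det A(p,q,f)` -/
def Dd (δ : ℝ) (p q : Fin 5 → ℝ) (f : Fin 4 → ℝ) : ℝ := (Amat δ p q f).det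

/-- pcZD strategy -/
def IsPcZD (δ T S : ℝ) (p : Fin 5 → ℝ) : Prop :=
  ∃ φ χ κ : ℝ, 0 < φ ∧ 1 ≤ χ ∧
    δ * p 1 + (1 - δ) * p 0 = 1 - φ * (χ - 1) * (1 - κ) ∧
    δ * p 2 + (1 - δ) * p 0 = 1 - φ * (χ * T - S - (χ - 1) * κ) ∧
    δ * p 3 + (1 - δ) * p 0 = φ * (T - χ * S + (χ - 1) * κ) ∧
    δ * p 4 + (1 - δ) * p 0 = φ * (χ - 1) * κ

/-- partial derivative of a function of the strategy vector `q`
in the coordinate `j`, taken at `q` -/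
def pderiv (f : (Fin 5 → ℝ) → ℝ) (j : Fin 5) (q : Fin 5 → ℝ) : ℝ :=
  deriv (fun t => f (Function.update q j t)) (q j)

/-- the 3×3 minor `M_ℓ` of `A(p,q,f)` (delete row `ℓ` and the 4th column);
here `ℓ : Fin 4` corresponds to the paper's `ℓ+1 ∈ {1,2,3,4}` -/
def Mminor (δ : ℝ) (p q : Fin 5 → ℝ) (ℓ : Fin 4) : Matrix (Fin 3) (Fin 3) ℝ :=
  Matrix.of fun i j => Amat δ p q ones4 (ℓ.succAbove i) (Fin.castSucc j)

/-- the index map λ(1)=1, λ(2)=3, λ(3)=2, λ(4)=4 (0-based on the left) -/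
def lamIdx : Fin 4 → Fin 5 := ![1, 3, 2, 4]

/-- the vector `r_ℓ` -/
def rvec (δ : ℝ) (p q : Fin 5 → ℝ) (ℓ : Fin 4) (i : Fin 3) : ℝ :=
  (p (lamIdx ℓ) * Amat δ p q ones4 ℓ 2 - Amat δ p q ones4 ℓ 0)
    + Mminor δ p q ℓ i 0 - p (lamIdx ℓ) * Mminor δ p q ℓ i 2

/-- the 2×2 determinants `𝔡_ℓ`; `ℓ : Fin 4` corresponds to the paper's `ℓ+1` -/
def frakD (δ T S : ℝ) (p q : Fin 5 → ℝ) (ℓ : Fin 4) : ℝ :=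
  ![ (rvec δ p q 0 0 + rvec δ p q 0 1) * (-1) - (T + S - 2) * rvec δ p q 0 2,
     (rvec δ p q 1 1 - 2 * rvec δ p q 1 2) * 1 - (T + S) * (rvec δ p q 1 0 - rvec δ p q 1 2),
     (rvec δ p q 2 0 - rvec δ p q 2 2) * (T + S) - 1 * (rvec δ p q 2 1 - 2 * rvec δ p q 2 2),
     (rvec δ p q 3 1 + rvec δ p q 3 2) * 1 - (T + S) * rvec δ p q 3 0 ] ℓ

def u1 (δ : ℝ) (p q : Fin 5 → ℝ) : ℝ :=
  (-1 + δ * q 1 - δ * q 4) * p 0 - (-1 + δ * p 1 * q 1 - δ * p 4 * q 4)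
def u2 (δ : ℝ) (p q : Fin 5 → ℝ) : ℝ :=
  (-1 + δ * q 2 - δ * q 4) * p 0 - (δ * p 3 * q 2 - δ * p 4 * q 4)
def u3 (δ : ℝ) (p q : Fin 5 → ℝ) : ℝ :=
  (δ * q 3 - δ * q 4) * p 0 - (δ * p 2 * q 3 - δ * p 4 * q 4)

/-- the determinant `𝔡_0 = det [[u1, 1], [u2+u3, T+S]]` -/
def frakD0 (δ T S : ℝ) (p q : Fin 5 → ℝ) : ℝ :=
  u1 δ p q * (T + S) - 1 * (u2 δ p q + u3 δ p q)



/-!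
A pcZD strategy `p` enforces the linear relation `χ sY - sX = (χ - 1) κ` against every `q`:
this is Akin's lemma for the discounted occupation vector `w = v(0) (I - δM)⁻¹`, which the pcZD
equations turn into a relation between the two payoffs. Eliminating `sX` and the frequency of
`DC` expresses `(χ (1 - S) + T - 1) sY` as a constant minus positive multiples of the discounted
frequencies of `CD` and `DD`, the states in which `Y` defects. So `sY` is maximal exactly when
`Y` never defects along the play, as for unconditional cooperation. An adapting path that
cannot be extended ends at a global maximiser of `sY`, hence at a `q` against which `Y` never
defects, and the first three rounds of the play already force the stated form of `q`.
-/

section Neumann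

attribute [local instance] Matrix.linftyOpNormedRing Matrix.linftyOpNormedAlgebra

variable {n : Type*} [Fintype n] [DecidableEq n] {M : Matrix n n ℝ} {δ : ℝ}

lemma linfty_opNorm_le_one_of_mem_rowStochastic (hM : M ∈ rowStochastic ℝ n) : ‖M‖ ≤ 1 := by
  rw [linfty_opNorm_def, ← NNReal.coe_one, NNReal.coe_le_coe]
  refine Finset.sup_le fun i _ => ?_
  rw [← NNReal.coe_le_coe]
  push_cast
  simp only [Real.norm_eq_abs, abs_of_nonneg (nonneg_of_mem_rowStochastic hM),
    sum_row_of_mem_rowStochastic hM, le_refl]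

lemma norm_smul_lt_one_of_mem_rowStochastic (hM : M ∈ rowStochastic ℝ n) (hδ0 : 0 ≤ δ)
    (hδ1 : δ < 1) : ‖δ • M‖ < 1 :=
  calc ‖δ • M‖ ≤ ‖δ‖ * ‖M‖ := norm_smul_le _ _
    _ ≤ δ * 1 := by
      rw [Real.norm_of_nonneg hδ0]
      gcongr
      exact linfty_opNorm_le_one_of_mem_rowStochastic hM
    _ < 1 := by linarith

lemma isUnit_one_sub_smul_of_mem_rowStochastic (hM : M ∈ rowStochastic ℝ n) (hδ0 : 0 ≤ δ)
    (hδ1 : δ < 1) : IsUnit (1 - δ • M) :=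
  isUnit_one_sub_of_norm_lt_one (norm_smul_lt_one_of_mem_rowStochastic hM hδ0 hδ1)

lemma hasSum_smul_pow_of_mem_rowStochastic (hM : M ∈ rowStochastic ℝ n) (hδ0 : 0 ≤ δ)
    (hδ1 : δ < 1) : HasSum (fun k => δ ^ k • M ^ k) (1 - δ • M)⁻¹ := by
  simp only [← smul_pow, nonsing_inv_eq_ringInverse]
  exact hasSum_geom_series_inverse _ (norm_smul_lt_one_of_mem_rowStochastic hM hδ0 hδ1)

end Neumann

section StochasticMatrix

variable {n : Type*} [Fintype n] [DecidableEq n] {M : Matrix n n ℝ} {δ : ℝ}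

lemma vecMul_inv_one_sub_smul_vecMul (hM : M ∈ rowStochastic ℝ n) (hδ0 : 0 ≤ δ)
    (hδ1 : δ < 1) (x : n → ℝ) : x ᵥ* (1 - δ • M)⁻¹ ᵥ* (1 - δ • M) = x := by
  rw [vecMul_vecMul, nonsing_inv_mul _ ((isUnit_iff_isUnit_det _).mp
    (isUnit_one_sub_smul_of_mem_rowStochastic hM hδ0 hδ1)), vecMul_one]

lemma hasSum_vecMul_smul_pow (hM : M ∈ rowStochastic ℝ n) (hδ0 : 0 ≤ δ) (hδ1 : δ < 1)
    (x : n → ℝ) : HasSum (fun k => δ ^ k • (x ᵥ* M ^ k)) (x ᵥ* (1 - δ • M)⁻¹) := by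
  have h := hasSum_smul_pow_of_mem_rowStochastic hM hδ0 hδ1
  refine Pi.hasSum.mpr fun j => ?_
  simp only [Pi.smul_apply, vecMul, dotProduct, smul_eq_mul, Finset.mul_sum]
  refine hasSum_sum fun i _ => ?_
  simpa [mul_left_comm] using ((Pi.hasSum.mp (Pi.hasSum.mp h i)) j).mul_left (x i)

lemma vecMul_pow_nonneg (hM : M ∈ rowStochastic ℝ n) {x : n → ℝ} (hx : 0 ≤ x) (k : ℕ) :
    0 ≤ x ᵥ* M ^ k :=
  nonneg_vecMul_of_mem_rowStochastic (pow_mem hM k) hx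

lemma vecMul_inv_one_sub_smul_nonneg (hM : M ∈ rowStochastic ℝ n) (hδ0 : 0 ≤ δ)
    (hδ1 : δ < 1) {x : n → ℝ} (hx : 0 ≤ x) : 0 ≤ x ᵥ* (1 - δ • M)⁻¹ :=
  (hasSum_vecMul_smul_pow hM hδ0 hδ1 x).nonneg fun k =>
    smul_nonneg (pow_nonneg hδ0 k) (vecMul_pow_nonneg hM hx k)

lemma vecMul_inv_one_sub_smul_apply_eq_zero_iff (hM : M ∈ rowStochastic ℝ n) (hδ0 : 0 < δ)
    (hδ1 : δ < 1) {x : n → ℝ} (hx : 0 ≤ x) (j : n) :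
    (x ᵥ* (1 - δ • M)⁻¹) j = 0 ↔ ∀ k, (x ᵥ* M ^ k) j = 0 := by
  have h := Pi.hasSum.mp (hasSum_vecMul_smul_pow hM hδ0.le hδ1 x) j
  simp only [Pi.smul_apply, smul_eq_mul] at h
  constructor
  · intro h0 k
    rw [h0, hasSum_zero_iff_of_nonneg fun k =>
      mul_nonneg (pow_nonneg hδ0.le k) (vecMul_pow_nonneg hM hx k j)] at h
    simpa [hδ0.ne'] using congrFun h k
  · intro h0
    simp only [h0, mul_zero] at h
    exact h.unique hasSum_zero

end StochasticMatrix

def occupation (δ : ℝ) (p q : Fin 5 → ℝ) : Fin 4 → ℝ :=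
  vInit p q ᵥ* (1 - δ • Mmat p q)⁻¹

def roundDist (p q : Fin 5 → ℝ) (k : ℕ) : Fin 4 → ℝ :=
  vInit p q ᵥ* Mmat p q ^ k

section Game

variable {δ : ℝ} {p q : Fin 5 → ℝ}

lemma unitBox_one : unitBox 1 := fun _ => ⟨zero_le_one, le_rfl⟩

lemma Mmat_mem_rowStochastic (hp : unitBox p) (hq : unitBox q) :
    Mmat p q ∈ rowStochastic ℝ (Fin 4) := by
  refine mem_rowStochastic_iff_sum.mpr ⟨fun i j => ?_, fun i => ?_⟩
  · have := hp 1; have := hp 2; have := hp 3; have := hp 4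
    have := hq 1; have := hq 2; have := hq 3; have := hq 4
    fin_cases i <;> fin_cases j <;> simp [Mmat] <;> apply mul_nonneg <;> linarith
  · fin_cases i <;> simp [Mmat, Fin.sum_univ_four] <;> ring

lemma vInit_nonneg (hp : unitBox p) (hq : unitBox q) : 0 ≤ vInit p q := by
  have := hp 0; have := hq 0
  intro i
  fin_cases i <;> simp [vInit] <;> apply mul_nonneg <;> linarith

lemma roundDist_nonneg (hp : unitBox p) (hq : unitBox q) (k : ℕ) : 0 ≤ roundDist p q k :=
  vecMul_pow_nonneg (Mmat_mem_rowStochastic hp hq) (vInit_nonneg hp hq) k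

lemma roundDist_zero_one_add_three : roundDist p q 0 1 + roundDist p q 0 3 = 1 - q 0 := by
  simp [roundDist, vInit]
  ring

lemma roundDist_succ_one_add_three (k : ℕ) :
    roundDist p q (k + 1) 1 + roundDist p q (k + 1) 3 =
      roundDist p q k 0 * (1 - q 1) + roundDist p q k 1 * (1 - q 3) +
        roundDist p q k 2 * (1 - q 2) + roundDist p q k 3 * (1 - q 4) := by
  simp only [roundDist, pow_succ, ← vecMul_vecMul]
  simp [vecMul, dotProduct, Fin.sum_univ_four, Mmat]
  ring

lemma roundDist_one_apply_one_and_three_eq_zero (p : Fin 5 → ℝ) (hp : unitBox p) (k : ℕ) :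
    roundDist p 1 k 1 = 0 ∧ roundDist p 1 k 3 = 0 := by
  have hsum : roundDist p 1 k 1 + roundDist p 1 k 3 = 0 := by
    cases k with
    | zero => simp [roundDist_zero_one_add_three]
    | succ k => simp [roundDist_succ_one_add_three]
  have h1 : 0 ≤ roundDist p 1 k 1 := roundDist_nonneg hp unitBox_one k 1
  have h3 : 0 ≤ roundDist p 1 k 3 := roundDist_nonneg hp unitBox_one k 3
  constructor <;> linarith

lemma occupation_nonneg (hp : unitBox p) (hq : unitBox q) (hδ0 : 0 ≤ δ) (hδ1 : δ < 1) :
    0 ≤ occupation δ p q :=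
  vecMul_inv_one_sub_smul_nonneg (Mmat_mem_rowStochastic hp hq) hδ0 hδ1 (vInit_nonneg hp hq)

lemma occupation_eq_zero_iff (hp : unitBox p) (hq : unitBox q) (hδ0 : 0 < δ) (hδ1 : δ < 1)
    (j : Fin 4) : occupation δ p q j = 0 ↔ ∀ k, roundDist p q k j = 0 :=
  vecMul_inv_one_sub_smul_apply_eq_zero_iff (Mmat_mem_rowStochastic hp hq) hδ0 hδ1
    (vInit_nonneg hp hq) j

lemma occupation_vecMul (hp : unitBox p) (hq : unitBox q) (hδ0 : 0 ≤ δ) (hδ1 : δ < 1) :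
    occupation δ p q ᵥ* (1 - δ • Mmat p q) = vInit p q :=
  vecMul_inv_one_sub_smul_vecMul (Mmat_mem_rowStochastic hp hq) hδ0 hδ1 _

end Game

section Payoffs

variable {δ T S χ κ : ℝ} {p q : Fin 5 → ℝ}

lemma occupation_balance (hp : unitBox p) (hq : unitBox q) (hδ0 : 0 ≤ δ) (hδ1 : δ < 1) :
    (1 - δ) * ∑ j, occupation δ p q j = 1 ∧
      δ * (occupation δ p q 0 * p 1 + occupation δ p q 1 * p 2 + occupation δ p q 2 * p 3 +
        occupation δ p q 3 * p 4) = occupation δ p q 0 + occupation δ p q 1 - p 0 := by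
  have h := occupation_vecMul hp hq hδ0 hδ1
  have h0 := congrFun h 0; have h1 := congrFun h 1
  have h2 := congrFun h 2; have h3 := congrFun h 3
  simp [vecMul, dotProduct, Fin.sum_univ_four, Mmat, vInit, Matrix.one_apply] at h0 h1 h2 h3
  rw [Fin.sum_univ_four]
  constructor
  · linear_combination h0 + h1 + h2 + h3
  · linear_combination -h0 - h1

lemma sY_eq (δ T S : ℝ) (p q : Fin 5 → ℝ) :
    sY δ T S p q = (1 - δ) * (occupation δ p q 0 + T * occupation δ p q 1 +
      S * occupation δ p q 2) := by
  change (1 - δ) * (occupation δ p q ⬝ᵥ SYvec T S) = _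
  congr 1
  simp [dotProduct, Fin.sum_univ_four, SYvec]
  ring

lemma sX_eq (δ T S : ℝ) (p q : Fin 5 → ℝ) :
    sX δ T S p q = (1 - δ) * (occupation δ p q 0 + S * occupation δ p q 1 +
      T * occupation δ p q 2) := by
  change (1 - δ) * (occupation δ p q ⬝ᵥ SXvec T S) = _
  congr 1
  simp [dotProduct, Fin.sum_univ_four, SXvec]
  ring

lemma IsPcZD.exists_linear_relation (h : IsPcZD δ T S p) (hp : unitBox p) (hδ0 : 0 ≤ δ)
    (hδ1 : δ < 1) :
    ∃ χ κ : ℝ, 1 ≤ χ ∧ ∀ q, unitBox q →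
      χ * sY δ T S p q - sX δ T S p q = (χ - 1) * κ := by
  obtain ⟨φ, χ, κ, hφ, hχ, h1, h2, h3, h4⟩ := h
  refine ⟨χ, κ, hχ, fun q hq => ?_⟩
  obtain ⟨hsum, hcoop⟩ := occupation_balance hp hq hδ0 hδ1
  rw [Fin.sum_univ_four] at hsum
  have hφrel : φ * (χ * sY δ T S p q - sX δ T S p q - (χ - 1) * κ) = 0 := by
    rw [sY_eq, sX_eq]
    linear_combination (1 - δ) * (occupation δ p q 0 * h1 + occupation δ p q 1 * h2 +
      occupation δ p q 2 * h3 + occupation δ p q 3 * h4 - hcoop) +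
      (φ * (χ - 1) * κ - (1 - δ) * p 0) * hsum
  linarith [(mul_eq_zero.mp hφrel).resolve_left hφ.ne']

lemma mul_sY_eq_of_linear_relation (hp : unitBox p) (hq : unitBox q) (hδ0 : 0 ≤ δ)
    (hδ1 : δ < 1) (hrel : χ * sY δ T S p q - sX δ T S p q = (χ - 1) * κ) :
    (χ * (1 - S) + T - 1) * sY δ T S p q =
      T - S + (1 - S) * (χ - 1) * κ
        - (2 - T - S) * (T - S) * ((1 - δ) * occupation δ p q 1)
        - (T - S) * ((1 - δ) * occupation δ p q 3) := by
  obtain ⟨hsum, -⟩ := occupation_balance hp hq hδ0 hδ1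
  rw [Fin.sum_univ_four] at hsum
  rw [sY_eq, sX_eq] at *
  linear_combination (1 - S) * hrel + (T - S) * hsum

end Payoffs

section Cooperation

variable {δ T S χ κ : ℝ} {p q : Fin 5 → ℝ}

lemma occupation_apply_one_and_three_eq_zero_of_le
    (hrel : ∀ q, unitBox q → χ * sY δ T S p q - sX δ T S p q = (χ - 1) * κ) (hχ : 1 ≤ χ)
    (hS : S ≤ 1) (hST : S < T) (hTS2 : T + S < 2) (hp : unitBox p) (hq : unitBox q)
    (hδ0 : 0 < δ) (hδ1 : δ < 1) (hle : sY δ T S p 1 ≤ sY δ T S p q) :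
    occupation δ p q 1 = 0 ∧ occupation δ p q 3 = 0 := by
  have hallC (j : Fin 4) (hj : ∀ k, roundDist p 1 k j = 0) : occupation δ p 1 j = 0 :=
    (occupation_eq_zero_iff hp unitBox_one hδ0 hδ1 j).mpr hj
  have hid := mul_sY_eq_of_linear_relation hp hq hδ0.le hδ1 (hrel q hq)
  have hidC := mul_sY_eq_of_linear_relation hp unitBox_one hδ0.le hδ1 (hrel 1 unitBox_one)
  rw [hallC 1 fun k => (roundDist_one_apply_one_and_three_eq_zero p hp k).1,
    hallC 3 fun k => (roundDist_one_apply_one_and_three_eq_zero p hp k).2] at hidC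
  have hD : 0 ≤ χ * (1 - S) + T - 1 := by nlinarith
  have hloss : (2 - T - S) * (T - S) * (1 - δ) * occupation δ p q 1 +
      (T - S) * (1 - δ) * occupation δ p q 3 ≤ 0 := by
    linear_combination hid - hidC + mul_le_mul_of_nonneg_left hle hD
  have hc1 : 0 < (2 - T - S) * (T - S) * (1 - δ) :=
    mul_pos (mul_pos (by linarith) (by linarith)) (by linarith)
  have hc3 : 0 < (T - S) * (1 - δ) := mul_pos (by linarith) (by linarith)
  have hw1 := mul_nonneg hc1.le (occupation_nonneg hp hq hδ0.le hδ1 1)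
  have hw3 := mul_nonneg hc3.le (occupation_nonneg hp hq hδ0.le hδ1 3)
  exact ⟨(mul_eq_zero.mp (by linarith)).resolve_left hc1.ne',
    (mul_eq_zero.mp (by linarith)).resolve_left hc3.ne'⟩

lemma roundDist_mul_eq_zero_of_never_defects (hp : unitBox p) (hq : unitBox q)
    (hnd : ∀ k, roundDist p q k 1 = 0 ∧ roundDist p q k 3 = 0) (k : ℕ) :
    roundDist p q k 0 * (1 - q 1) = 0 ∧ roundDist p q k 2 * (1 - q 2) = 0 := by
  have hsucc := roundDist_succ_one_add_three (p := p) (q := q) k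
  rw [(hnd (k + 1)).1, (hnd (k + 1)).2, (hnd k).1, (hnd k).2] at hsucc
  have h0 : 0 ≤ roundDist p q k 0 * (1 - q 1) :=
    mul_nonneg (roundDist_nonneg hp hq k 0) (by linarith [(hq 1).2])
  have h2 : 0 ≤ roundDist p q k 2 * (1 - q 2) :=
    mul_nonneg (roundDist_nonneg hp hq k 2) (by linarith [(hq 2).2])
  constructor <;> linarith

lemma cooperation_of_never_defects (hp : unitBox p) (hq : unitBox q)
    (hp3 : p 0 = 0 → 0 < p 3) (hnd : ∀ k, roundDist p q k 1 = 0 ∧ roundDist p q k 3 = 0) :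
    ((q 0 = 1 ∧ q 1 = 1 ∧ q 2 = 1) ∨ (p 0 = 1 ∧ p 1 = 1 ∧ q 0 = 1 ∧ q 1 = 1)) ∧
      ((p 0 < 1 ∨ p 1 < 1) → (q 0 = 1 ∧ q 1 = 1 ∧ q 2 = 1)) := by
  have hq0 : q 0 = 1 := by
    linarith [roundDist_zero_one_add_three (p := p) (q := q), (hnd 0).1, (hnd 0).2]
  obtain ⟨hA, hB⟩ := roundDist_mul_eq_zero_of_never_defects hp hq hnd 0
  obtain ⟨hC, hD⟩ := roundDist_mul_eq_zero_of_never_defects hp hq hnd 1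
  simp only [roundDist, pow_zero, pow_one, vecMul_one] at hA hB hC hD
  simp only [vInit, vecMul, dotProduct, Mmat, Fin.sum_univ_four, Fin.isValue, of_apply, cons_val',
    cons_val_zero, cons_val_one, cons_val, cons_val_fin_one, hq0, mul_one, sub_self, mul_zero,
    zero_mul, add_zero, mul_eq_zero, sub_eq_zero] at hA hB hC hD
  have hq1 : q 1 = 1 := by
    rcases hA with hp0 | hq1
    · have hq2 : q 2 = 1 := by rcases hB with h | h <;> linarith
      rcases hC with h | h
      · simp only [hp0, hq2] at h
        linarith [hp3 hp0]
      · linarith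
    · linarith
  by_cases hpC : p 0 = 1 ∧ p 1 = 1
  · refine ⟨Or.inr ⟨hpC.1, hpC.2, hq0, hq1⟩, ?_⟩
    rintro (h | h) <;> linarith [hpC.1, hpC.2]
  · have hq2 : q 2 = 1 := by
      rcases hB with hp0 | hq2
      · rcases hD with h | h
        · simp only [← hp0, hq1] at h
          exact absurd ⟨hp0.symm, by linarith⟩ hpC
        · linarith
      · linarith
    exact ⟨Or.inl ⟨hq0, hq1, hq2⟩, fun _ => ⟨hq0, hq1, hq2⟩⟩

end Cooperation

lemma apply_le_of_maximal_strictMono_path {α β : Type*} [LinearOrder β] {P : α → Prop}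
    {f : α → β} {N : ℕ} {lam : ℕ → α} (hmem : ∀ n ≤ N, P (lam n))
    (hA1 : ∀ n1 n2 : ℕ, n1 < n2 → n2 ≤ N → f (lam n1) < f (lam n2))
    (hA2 : ¬ ∃ (N' : ℕ) (lam' : ℕ → α), N < N' ∧ (∀ n ≤ N', P (lam' n)) ∧
      (∀ n ≤ N, lam' n = lam n) ∧
      (∀ n1 n2 : ℕ, n1 < n2 → n2 ≤ N' → f (lam' n1) < f (lam' n2)))
    {a : α} (ha : P a) : f a ≤ f (lam N) := by
  by_contra! hlt
  refine hA2 ⟨N + 1, fun n => if n ≤ N then lam n else a, N.lt_succ_self, fun n _ => ?_,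
    fun n hn => if_pos hn, fun n1 n2 h12 h2 => ?_⟩
  · dsimp only
    split_ifs with hn
    exacts [hmem n hn, ha]
  · have h1 : n1 ≤ N := by omega
    simp only [if_pos h1]
    split_ifs with hn2
    · exact hA1 n1 n2 h12 hn2
    · rcases h1.eq_or_lt with rfl | h1
      · exact hlt
      · exact (hA1 n1 N h1 le_rfl).trans hlt

lemma IsPcZD.pos_apply_three_of_apply_zero_eq_zero {δ T S : ℝ} {p : Fin 5 → ℝ} (h : IsPcZD δ T S p)
    (hp : unitBox p) (hδ0 : 0 < δ) (hS : S < 0) (hT : 0 ≤ T) (hp0 : p 0 = 0) : 0 < p 3 := by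
  obtain ⟨φ, χ, κ, hφ, hχ, -, -, h3, h4⟩ := h
  simp only [hp0, mul_zero, add_zero] at h3 h4
  have hκ : 0 ≤ (χ - 1) * κ := by
    have : 0 ≤ φ * ((χ - 1) * κ) := by rw [← mul_assoc, ← h4]; exact mul_nonneg hδ0.le (hp 4).1
    exact nonneg_of_mul_nonneg_right this hφ
  have hχS : χ * S ≤ S := by nlinarith
  have : 0 < δ * p 3 := by rw [h3]; exact mul_pos hφ (by linarith)
  exact pos_of_mul_pos_right this hδ0.le

theorem adapting_paths_lead_to_cooperation_general
    (T S δ : ℝ) (hS : S < 0) (hT : 1 < T) (hTS2 : T + S < 2)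
    (hδc : max ((T - 1) / T) (-S / (1 - S)) < δ) (hδ1 : δ < 1)
    (p : Fin 5 → ℝ) (hp : unitBox p) (hpczd : IsPcZD δ T S p)
    (N : ℕ) (lam : ℕ → Fin 5 → ℝ)
    (hmem : ∀ n ≤ N, unitBox (lam n))
    (hA1 : ∀ n1 n2 : ℕ, n1 < n2 → n2 ≤ N →
      sY δ T S p (lam n1) < sY δ T S p (lam n2))
    (hA2 : ¬ ∃ (N' : ℕ) (lam' : ℕ → Fin 5 → ℝ), N < N' ∧
      (∀ n ≤ N', unitBox (lam' n)) ∧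
      (∀ n ≤ N, lam' n = lam n) ∧
      (∀ n1 n2 : ℕ, n1 < n2 → n2 ≤ N' →
        sY δ T S p (lam' n1) < sY δ T S p (lam' n2))) :
    ((lam N 0 = 1 ∧ lam N 1 = 1 ∧ lam N 2 = 1) ∨
      (p 0 = 1 ∧ p 1 = 1 ∧ lam N 0 = 1 ∧ lam N 1 = 1)) ∧
    ((p 0 < 1 ∨ p 1 < 1) → (lam N 0 = 1 ∧ lam N 1 = 1 ∧ lam N 2 = 1)) := by
  have hδ0 : 0 < δ := (div_pos (by linarith) (by linarith)).trans_le (le_max_left _ _)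
    |>.trans hδc
  have hq : unitBox (lam N) := hmem N le_rfl
  obtain ⟨χ, κ, hχ, hrel⟩ := hpczd.exists_linear_relation hp hδ0.le hδ1
  have hle : sY δ T S p 1 ≤ sY δ T S p (lam N) :=
    apply_le_of_maximal_strictMono_path hmem hA1 hA2 unitBox_one
  obtain ⟨hw1, hw3⟩ := occupation_apply_one_and_three_eq_zero_of_le hrel hχ (by linarith)
    (by linarith) hTS2 hp hq hδ0 hδ1 hle
  rw [occupation_eq_zero_iff hp hq hδ0 hδ1] at hw1 hw3
  exact cooperation_of_never_defects hp hq
    (hpczd.pos_apply_three_of_apply_zero_eq_zero hp hδ0 hS (by linarith)) fun k => ⟨hw1 k, hw3 k⟩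

/-- every adapting path of the adaptive player against a pcZD
strategy terminates at unconditional cooperation. -/
theorem adapting_paths_lead_to_cooperation
    (T S δ : ℝ) (hS : S < 0) (hT : 1 < T) (hTS2 : T + S < 2) (hTS0 : 0 < T + S)
    (hδc : max ((T - 1) / T) (-S / (1 - S)) < δ) (hδ1 : δ < 1)
    (p : Fin 5 → ℝ) (hp : unitBox p) (hpczd : IsPcZD δ T S p)
    (N : ℕ) (lam : ℕ → Fin 5 → ℝ)
    (hmem : ∀ n ≤ N, unitBox (lam n))
    (hA1 : ∀ n1 n2 : ℕ, n1 < n2 → n2 ≤ N →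
      sY δ T S p (lam n1) < sY δ T S p (lam n2))
    (hA2 : ¬ ∃ (N' : ℕ) (lam' : ℕ → Fin 5 → ℝ), N < N' ∧
      (∀ n ≤ N', unitBox (lam' n)) ∧
      (∀ n ≤ N, lam' n = lam n) ∧
      (∀ n1 n2 : ℕ, n1 < n2 → n2 ≤ N' →
        sY δ T S p (lam' n1) < sY δ T S p (lam' n2))) :
    ((lam N 0 = 1 ∧ lam N 1 = 1 ∧ lam N 2 = 1) ∨
      (p 0 = 1 ∧ p 1 = 1 ∧ lam N 0 = 1 ∧ lam N 1 = 1)) ∧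
    ((p 0 < 1 ∨ p 1 < 1) → (lam N 0 = 1 ∧ lam N 1 = 1 ∧ lam N 2 = 1)) :=
  adapting_paths_lead_to_cooperation_general T S δ hS hT hTS2 hδc hδ1 p hp hpczd N lam hmem hA1 hA2

end ZDGame
end
end

section
/- Let T>1>0>S, δ∈(0,1), and let p∈[0,1]^5 be a pcZD strategy. Then p1 > p2 and p3 > p4 (equivalently, p1>0, 1−p2>0, p3>0, and 1−p4>0). -/
noncomputable section
namespace ZDGame

open Matrix

/-! Subtracting the defining equations of a pcZD strategy eliminates `p 0` and `κ`:
`δ (p 1 - p 2) = φ (χ (T - 1) + 1 - S)` and `δ (p 3 - p 4) = φ (T - χ S)`, and for `χ ≥ 1`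
both right-hand sides are positive. -/

section
variable {δ T S : ℝ} {p : Fin 5 → ℝ}

theorem IsPcZD.p_two_lt_p_one (h : IsPcZD δ T S p) (hδ : 0 < δ) (hT : 1 ≤ T) (hS : S < 1) :
    p 2 < p 1 := by
  obtain ⟨φ, χ, κ, hφ, hχ, h1, h2, -, -⟩ := h
  have hgap : δ * (p 1 - p 2) = φ * (χ * (T - 1) + (1 - S)) := by linear_combination h1 - h2
  have hpos : 0 < χ * (T - 1) + (1 - S) := by nlinarith
  exact sub_pos.mp (pos_of_mul_pos_right (hgap ▸ mul_pos hφ hpos) hδ.le)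

theorem IsPcZD.p_four_lt_p_three (h : IsPcZD δ T S p) (hδ : 0 < δ) (hT : 0 < T) (hS : S ≤ 0) :
    p 4 < p 3 := by
  obtain ⟨φ, χ, κ, hφ, hχ, -, -, h3, h4⟩ := h
  have hgap : δ * (p 3 - p 4) = φ * (T - χ * S) := by linear_combination h3 - h4
  have hpos : 0 < T - χ * S := by nlinarith
  exact sub_pos.mp (pos_of_mul_pos_right (hgap ▸ mul_pos hφ hpos) hδ.le)

end

theorem pcZD_entry_inequalities_general (δ T S : ℝ) (hδ0 : 0 < δ)
    (hT : 1 < T) (hS : S < 0)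
    (p : Fin 5 → ℝ) (hp : unitBox p) (hpczd : IsPcZD δ T S p) :
    p 1 > p 2 ∧ p 3 > p 4 ∧
      0 < p 1 ∧ 1 - p 2 > 0 ∧ 0 < p 3 ∧ 1 - p 4 > 0 := by
  have h12 := hpczd.p_two_lt_p_one hδ0 hT.le (hS.trans one_pos)
  have h34 := hpczd.p_four_lt_p_three hδ0 (one_pos.trans hT) hS.le
  obtain ⟨hp2, -⟩ := hp 2
  obtain ⟨-, hp1⟩ := hp 1
  obtain ⟨hp4, -⟩ := hp 4
  obtain ⟨-, hp3⟩ := hp 3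
  exact ⟨h12, h34, by linarith, by linarith, by linarith, by linarith⟩

/-- a pcZD strategy satisfies `p1 > p2` and `p3 > p4`
(equivalently `p1, 1-p2, p3, 1-p4 > 0`). -/
theorem pcZD_entry_inequalities (δ T S : ℝ) (hδ0 : 0 < δ) (hδ1 : δ < 1)
    (hT : 1 < T) (hS : S < 0)
    (p : Fin 5 → ℝ) (hp : unitBox p) (hpczd : IsPcZD δ T S p) :
    p 1 > p 2 ∧ p 3 > p 4 ∧
      0 < p 1 ∧ 1 - p 2 > 0 ∧ 0 < p 3 ∧ 1 - p 4 > 0 :=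
  pcZD_entry_inequalities_general δ T S hδ0 hT hS p hp hpczd

end ZDGame
end
end
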